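/- arXiv:math/0502414 — 13 statements merged into one kernel-verified Lean document; each statement's English description precedes it below -/
import Mathlib

section
/- Let δ* be a transfer operator for (A, δ). Then the following are equivalent: (ii) δ ∘ δ* ∘ δ = δ; (iii) δ(δ*(1)) = δ(1). -/
/-- A (not necessarily unital) *-algebra endomorphism of a unital C*-algebra:
a linear, multiplicative, star-preserving map. -/
def IsEndomorphism {A : Type*} [CStarAlgebra A] (δ : A → A) : Prop :=
  IsLinearMap ℂ δ ∧ (∀ a b, δ (a * b) = δ a * δ b) ∧ (∀ a, δ (star a) = star (δ a))

/-- A transfer operator for `(A, δ)`: a continuous positive linear map `δs`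
satisfying `δs (δ a * b) = a * δs b`. -/
def IsTransferOperator {A : Type*} [CStarAlgebra A] [PartialOrder A] [StarOrderedRing A]
    (δ δs : A → A) : Prop :=
  Continuous δs ∧ IsLinearMap ℂ δs ∧ (∀ a, 0 ≤ a → 0 ≤ δs a) ∧
    ∀ a b, δs (δ a * b) = a * δs b

/-- For a transfer operator δ* for (A, δ):
δ ∘ δ* ∘ δ = δ  ↔  δ(δ*(1)) = δ(1). -/
theorem nondegenerate_iff_delta_deltaStar_one {A : Type*} [CStarAlgebra A] [PartialOrder A]
    [StarOrderedRing A] (δ δs : A → A) (hδ : IsEndomorphism δ)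
    (hT : IsTransferOperator δ δs) :
    (∀ a : A, δ (δs (δ a)) = δ a) ↔ δ (δs 1) = δ 1 := by
  obtain ⟨-, hmul, -⟩ := hδ
  obtain ⟨-, -, -, hcov⟩ := hT
  have key : ∀ a : A, δs (δ a) = a * δs 1 := fun a => by
    rw [← mul_one (δ a), hcov]
  constructor
  · intro h
    have := h 1
    rwa [key, one_mul] at this
  · intro h a
    rw [key, hmul, h, ← hmul, mul_one]
end

section
/- Let δ* be a non-degenerate transfer operator for (A, δ). Then A decomposes as the direct sum of two-sided ideals A = Ker δ ⊕ Im δ*: that is, Ker δ and the range of δ* are two-sided ideals of A, their intersection is {0}, and every element of A is the sum of an element of Ker δ and an element of the range of δ*. -/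
/-- A positive linear map on a unital C*-algebra is star-preserving. -/
theorem positive_linear_star {A : Type*} [CStarAlgebra A] [PartialOrder A]
    [StarOrderedRing A] (δs : A → A) (hlin : IsLinearMap ℂ δs)
    (hpos : ∀ a, 0 ≤ a → 0 ≤ δs a) :
    ∀ a, δs (star a) = star (δs a) := by
  have hsa : ∀ a, IsSelfAdjoint a → IsSelfAdjoint (δs a) := by
    intro a ha
    have h := CFC.posPart_sub_negPart a ha
    rw [← h, hlin.map_sub]
    exact ((IsSelfAdjoint.of_nonneg (hpos _ (CFC.posPart_nonneg a))).sub
      (IsSelfAdjoint.of_nonneg (hpos _ (CFC.negPart_nonneg a))))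
  intro a
  have hre_sa : IsSelfAdjoint ((2:ℂ)⁻¹ • (a + star a)) := by
    simp [IsSelfAdjoint, star_smul, add_comm]
  have him_sa : IsSelfAdjoint (((2:ℂ) * Complex.I)⁻¹ • (a - star a)) := by
    rw [IsSelfAdjoint, star_smul, star_sub, star_star,
      show star a - a = -(a - star a) by abel, smul_neg,
      show star (((2:ℂ) * Complex.I)⁻¹) = -((2:ℂ) * Complex.I)⁻¹ by
        simp [Complex.ext_iff],
      neg_smul, neg_neg]
  have hI : Complex.I * ((2:ℂ) * Complex.I)⁻¹ = (2:ℂ)⁻¹ := by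
    field_simp [Complex.I_ne_zero]
  have ha : a = (2:ℂ)⁻¹ • (a + star a)
      + Complex.I • (((2:ℂ) * Complex.I)⁻¹ • (a - star a)) := by
    rw [smul_smul, hI, ← smul_add,
      show a + star a + (a - star a) = (2:ℂ) • a by rw [two_smul]; abel,
      smul_smul]
    simp
  have hstara : star a = (2:ℂ)⁻¹ • (a + star a)
      - Complex.I • (((2:ℂ) * Complex.I)⁻¹ • (a - star a)) := by
    rw [smul_smul, hI, ← smul_sub,
      show a + star a - (a - star a) = (2:ℂ) • star a by rw [two_smul]; abel,
      smul_smul]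
    simp
  calc δs (star a)
      = δs ((2:ℂ)⁻¹ • (a + star a))
        - Complex.I • δs (((2:ℂ) * Complex.I)⁻¹ • (a - star a)) := by
        rw [← hlin.map_smul, ← hlin.map_sub, ← hstara]
    _ = star (δs ((2:ℂ)⁻¹ • (a + star a))
        + Complex.I • δs (((2:ℂ) * Complex.I)⁻¹ • (a - star a))) := by
        rw [star_add, star_smul, (hsa _ hre_sa).star_eq, (hsa _ him_sa).star_eq]
        simp [sub_eq_add_neg, Complex.ext_iff]
    _ = star (δs a) := by rw [← hlin.map_smul, ← hlin.map_add, ← ha]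

/-- For a non-degenerate transfer operator δ*, the algebra decomposes as the
direct sum of the two-sided ideals Ker δ and Im δ*. -/
theorem kernel_range_direct_sum {A : Type*} [CStarAlgebra A] [PartialOrder A]
    [StarOrderedRing A] (δ δs : A → A) (hδ : IsEndomorphism δ)
    (hT : IsTransferOperator δ δs) (hnd : ∀ a : A, δ (δs (δ a)) = δ a) :
    (∀ x ∈ {x : A | δ x = 0}, ∀ a : A, a * x ∈ {x : A | δ x = 0} ∧ x * a ∈ {x : A | δ x = 0}) ∧
    (∀ x ∈ Set.range δs, ∀ a : A, a * x ∈ Set.range δs ∧ x * a ∈ Set.range δs) ∧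
    ({x : A | δ x = 0} ∩ Set.range δs = {0}) ∧
    (∀ a : A, ∃ k ∈ {x : A | δ x = 0}, ∃ r ∈ Set.range δs, a = k + r) := by
  obtain ⟨hδlin, hδmul, hδstar⟩ := hδ
  obtain ⟨-, hlin, hpos, htr⟩ := hT
  have hstar : ∀ a, δs (star a) = star (δs a) := positive_linear_star δs hlin hpos
  -- the right-handed transfer identity
  have htr' : ∀ a b, δs (a * δ b) = δs a * b := by
    intro a b
    rw [show a * δ b = star (star (δ b) * star a) by simp, ← hδstar b, hstar,
      htr, star_mul, hstar a, star_star, star_star]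
  have h1 : ∀ a, δ a = δ 1 * δ a := fun a => by rw [← hδmul, one_mul]
  have h1' : ∀ a, δ a = δ a * δ 1 := fun a => by rw [← hδmul, mul_one]
  -- δs ∘ δ is left and right multiplication by k := δs (δ 1)
  have hFr : ∀ a, δs (δ a) = a * δs (δ 1) := by
    intro a
    conv_lhs => rw [h1' a]
    exact htr a (δ 1)
  have hFl : ∀ a, δs (δ a) = δs (δ 1) * a := by
    intro a
    conv_lhs => rw [h1 a]
    exact htr' (δ 1) a
  have hcomm : ∀ a, a * δs (δ 1) = δs (δ 1) * a := fun a =>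
    (hFr a).symm.trans (hFl a)
  -- k acts as the identity on the range of δs
  have hkl : ∀ b, δs (δ 1) * δs b = δs b := by
    intro b
    calc δs (δ 1) * δs b = δs (δ (δs (δ 1)) * b) := (htr _ b).symm
      _ = δs (δ 1 * b) := by rw [hnd 1]
      _ = 1 * δs b := htr 1 b
      _ = δs b := one_mul _
  have hrange : ∀ c : A, δs (δ 1) * c = c → c ∈ Set.range δs := fun c hc =>
    ⟨δ c, (hFl c).trans hc⟩
  have hmem : ∀ c ∈ Set.range δs, δs (δ 1) * c = c := by
    rintro c ⟨b, rfl⟩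
    exact hkl b
  refine ⟨?_, ?_, ?_, ?_⟩
  · -- Ker δ is a two-sided ideal
    intro x hx a
    have hx' : δ x = 0 := hx
    constructor <;> simp only [Set.mem_setOf_eq, hδmul, hx', mul_zero, zero_mul]
  · -- Im δs is a two-sided ideal
    intro x hx a
    have hx' := hmem x hx
    constructor
    · exact hrange _ (by rw [← mul_assoc, ← hcomm a, mul_assoc, hx'])
    · exact hrange _ (by rw [← mul_assoc, hx'])
  · -- trivial intersection
    ext x
    constructor
    · rintro ⟨hker, hr⟩
      have hx : δ x = 0 := hker
      have h : δs (δ x) = x := (hFl x).trans (hmem x hr)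
      rw [Set.mem_singleton_iff, ← h, hx, hlin.map_zero]
    · intro hx
      rw [Set.mem_singleton_iff] at hx
      subst hx
      exact ⟨hδlin.map_zero, ⟨0, hδlin.map_zero ▸ hlin.map_zero⟩⟩
  · -- decomposition
    intro a
    refine ⟨a - δs (δ a), ?_, δs (δ a), ⟨δ a, rfl⟩, by abel⟩
    show δ (a - δs (δ a)) = 0
    rw [hδlin.map_sub, hnd, sub_self]
end

section
/- The range δ(A) is a hereditary subalgebra of A if and only if δ(A) = δ(1)·A·δ(1), i.e. δ(A) equals the set {δ(1)·a·δ(1) : a ∈ A}. -/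
/-!
`p = δ 1` is a projection and `δ a = p δ(a) p`, so `δ(A) ⊆ pAp` always. If `δ(A)` is hereditary,
then for `a ≥ 0` the bound `0 ≤ p a p ≤ ‖a‖ p = δ(‖a‖ 1)` puts `p a p` in `δ(A)`, and positive
elements span `A`. Conversely, if `δ(A) = pAp` and `0 ≤ a ≤ δ c`, then `a ≤ ‖δ c‖ p`, which
forces `a = p a p`.
-/

section StarProjection

variable {A : Type*} [CStarAlgebra A] [PartialOrder A] [StarOrderedRing A] {p a : A}

lemma IsStarProjection.conjugate_le_norm_smul (hp : IsStarProjection p) (ha : IsSelfAdjoint a) :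
    p * a * p ≤ ‖a‖ • p := by
  have h := hp.isSelfAdjoint.conjugate_le_conjugate ha.le_algebraMap_norm_self
  rwa [Algebra.algebraMap_eq_smul_one, mul_smul_comm, smul_mul_assoc, mul_one,
    hp.isIdempotentElem.eq] at h

lemma IsStarProjection.conjugate_of_nonneg_of_le_smul (hp : IsStarProjection p) (ha : 0 ≤ a)
    {r : ℝ} (hapr : a ≤ r • p) : p * a * p = a := by
  rcases le_or_gt r 0 with hr | hr
  · have ha0 : a = 0 :=
      le_antisymm (hapr.trans (smul_nonpos_of_nonpos_of_nonneg hr hp.nonneg)) ha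
    simp [ha0]
  · have h := hp.conjugate_of_nonneg_of_le (smul_nonneg (inv_nonneg.2 hr.le) ha)
      ((smul_le_smul_of_nonneg_left hapr (inv_nonneg.2 hr.le)).trans_eq (inv_smul_smul₀ hr.ne' p))
    rwa [mul_smul_comm, smul_mul_assoc, smul_right_inj (inv_ne_zero hr.ne')] at h

lemma Submodule.conjugate_mem_of_hereditary (S : Submodule ℂ A)
    (hS : ∀ x y : A, 0 ≤ x → x ≤ y → y ∈ S → x ∈ S) (hp : IsStarProjection p) (hpS : p ∈ S)
    (a : A) : p * a * p ∈ S := by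
  have hnonneg : {a : A | 0 ≤ a} ⊆ S.comap (LinearMap.mulLeftRight ℂ (p, p)) := fun x hx =>
    hS _ _ (hp.isSelfAdjoint.conjugate_nonneg hx)
      (hp.conjugate_le_norm_smul (IsSelfAdjoint.of_nonneg hx)) (S.smul_of_tower_mem ‖x‖ hpS)
  have hspan := Submodule.span_le.2 hnonneg
  rw [CStarAlgebra.span_nonneg] at hspan
  exact hspan Submodule.mem_top

end StarProjection

namespace IsEndomorphism

variable {A : Type*} [CStarAlgebra A] {δ : A → A}

lemma isStarProjection_map_one (hδ : IsEndomorphism δ) : IsStarProjection (δ 1) :=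
  ⟨by rw [IsIdempotentElem, ← hδ.2.1, one_mul], by rw [IsSelfAdjoint, ← hδ.2.2, star_one]⟩

lemma map_eq_map_one_mul_mul_map_one (hδ : IsEndomorphism δ) (a : A) :
    δ a = δ 1 * δ a * δ 1 := by
  rw [← hδ.2.1, ← hδ.2.1, one_mul, mul_one]

end IsEndomorphism

/-- δ(A) is a hereditary subalgebra of A iff δ(A) = δ(1)·A·δ(1). -/
theorem range_hereditary_iff {A : Type*} [CStarAlgebra A] [PartialOrder A]
    [StarOrderedRing A] (δ : A → A) (hδ : IsEndomorphism δ) :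
    (∀ a b : A, 0 ≤ a → a ≤ b → b ∈ Set.range δ → a ∈ Set.range δ) ↔
      Set.range δ = {x : A | ∃ a : A, x = δ 1 * a * δ 1} := by
  have hp := hδ.isStarProjection_map_one
  have hconj := hδ.map_eq_map_one_mul_mul_map_one
  constructor
  · intro hher
    refine Set.Subset.antisymm ?_ ?_ <;> rintro _ ⟨a, rfl⟩
    · exact ⟨δ a, hconj a⟩
    · exact (LinearMap.range (hδ.1.mk' δ)).conjugate_mem_of_hereditary hher hp ⟨1, rfl⟩ a
  · rintro h a b ha hab ⟨c, rfl⟩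
    have hδc : IsSelfAdjoint (δ c) := IsSelfAdjoint.of_nonneg (ha.trans hab)
    have hbound : a ≤ ‖δ c‖ • δ 1 :=
      hab.trans ((hconj c).trans_le (hp.conjugate_le_norm_smul hδc))
    rw [h]
    exact ⟨a, (hp.conjugate_of_nonneg_of_le_smul ha hbound).symm⟩
end

section
/- Let δ* be a non-degenerate transfer operator for (A, δ). Then δ*(1) is an orthogonal projection lying in the center of A: δ*(1)² = δ*(1), δ*(1)* = δ*(1), and δ*(1)·a = a·δ*(1) for every a ∈ A. -/
open ComplexStarModule


/-- A positive linear map on a C*-algebra is star-preserving. -/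
lemma star_pres {A : Type*} [CStarAlgebra A] [PartialOrder A] [StarOrderedRing A]
    (δs : A → A) (hlin : IsLinearMap ℂ δs) (hpos : ∀ a : A, 0 ≤ a → 0 ≤ δs a) :
    ∀ a : A, δs (star a) = star (δs a) := by
  have hsa : ∀ h : A, IsSelfAdjoint h → IsSelfAdjoint (δs h) := by
    intro h hh
    have hd : δs h = δs h⁺ - δs h⁻ := by
      rw [← hlin.map_sub, CFC.posPart_sub_negPart h hh]
    rw [hd]
    exact (IsSelfAdjoint.of_nonneg (hpos _ (CFC.posPart_nonneg h))).sub
      (IsSelfAdjoint.of_nonneg (hpos _ (CFC.negPart_nonneg h)))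
  intro a
  have hre : IsSelfAdjoint (δs (ℜ a : A)) := hsa _ (ℜ a).2
  have him : IsSelfAdjoint (δs (ℑ a : A)) := hsa _ (ℑ a).2
  have hstar_a : star a = (ℜ a : A) - Complex.I • (ℑ a : A) := by
    conv_lhs => rw [← realPart_add_I_smul_imaginaryPart a]
    rw [star_add, star_smul, (ℜ a).2.star_eq, (ℑ a).2.star_eq, Complex.star_def,
      Complex.conj_I, neg_smul, ← sub_eq_add_neg]
  have ha : a = (ℜ a : A) + Complex.I • (ℑ a : A) :=
    (realPart_add_I_smul_imaginaryPart a).symm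
  rw [hstar_a, hlin.map_sub, hlin.map_smul]
  conv_rhs => rw [ha, hlin.map_add, hlin.map_smul]
  rw [star_add, star_smul, hre.star_eq, him.star_eq, Complex.star_def, Complex.conj_I,
    neg_smul, ← sub_eq_add_neg]

/-- For a non-degenerate transfer operator δ*, the element δ*(1) is an
orthogonal projection lying in the center of A. -/
theorem deltaStar_one_central_projection {A : Type*} [CStarAlgebra A] [PartialOrder A]
    [StarOrderedRing A] (δ δs : A → A) (hδ : IsEndomorphism δ)
    (hT : IsTransferOperator δ δs) (hnd : ∀ a : A, δ (δs (δ a)) = δ a) :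
    δs 1 * δs 1 = δs 1 ∧ star (δs 1) = δs 1 ∧ ∀ a : A, δs 1 * a = a * δs 1 := by
  obtain ⟨hδlin, hδmul, hδstar⟩ := hδ
  obtain ⟨hcont, hlin, hpos, htr⟩ := hT
  have hstar := star_pres δs hlin hpos
  -- δs (δ 1) = δs 1
  have hse : δs (δ 1) = δs 1 := by
    have := htr 1 1
    rwa [mul_one, one_mul] at this
  -- δ (δs 1) = δ 1
  have hdp : δ (δs 1) = δ 1 := by
    rw [← hse]; exact hnd 1
  -- projection
  have hproj : δs 1 * δs 1 = δs 1 := by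
    have := htr (δs 1) 1
    rw [hdp, mul_one, hse] at this
    exact this.symm
  -- self adjoint
  have hsa : star (δs 1) = δs 1 :=
    (IsSelfAdjoint.of_nonneg (hpos 1 zero_le_one)).star_eq
  refine ⟨hproj, hsa, fun a => ?_⟩
  -- δs (δ a) = a * δs 1
  have h1 : ∀ b : A, δs (δ b) = b * δs 1 := by
    intro b
    have := htr b 1
    rwa [mul_one] at this
  calc δs 1 * a = star (star a * star (δs 1)) := by rw [star_mul, star_star, star_star]
    _ = star (star a * δs 1) := by rw [hsa]
    _ = star (δs (δ (star a))) := by rw [h1]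
    _ = δs (star (δ (star a))) := (hstar _).symm
    _ = δs (δ a) := by rw [← hδstar, star_star]
    _ = a * δs 1 := h1 a
end

section
/- Let δ* be a non-degenerate transfer operator for (A, δ). Then the range of δ* equals δ*(1)·A, i.e. δ*(A) = {δ*(1)·a : a ∈ A}. -/
/-- A positive ℂ-linear map on a C*-algebra is star-preserving. -/
lemma star_preserving_of_positive {A : Type*} [CStarAlgebra A] [PartialOrder A]
    [StarOrderedRing A] (δs : A → A) (hlin : IsLinearMap ℂ δs)
    (hpos : ∀ a, 0 ≤ a → 0 ≤ δs a) : ∀ x, δs (star x) = star (δs x) := by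
  have hsa : ∀ h : A, IsSelfAdjoint h → IsSelfAdjoint (δs h) := by
    intro h hh
    have hdecomp : h = h⁺ - h⁻ := (CFC.posPart_sub_negPart h hh).symm
    rw [hdecomp, hlin.map_sub]
    exact (IsSelfAdjoint.of_nonneg (hpos _ (CFC.posPart_nonneg h))).sub
      (IsSelfAdjoint.of_nonneg (hpos _ (CFC.negPart_nonneg h)))
  intro x
  set h : A := (1/2 : ℂ) • (x + star x) with hh_def
  set k : A := (-(Complex.I)/2 : ℂ) • (x - star x) with hk_def
  have hh : IsSelfAdjoint h := by
    simp only [IsSelfAdjoint, hh_def, star_smul, star_add, star_star]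
    rw [add_comm]
    congr 1
    simp [Complex.ext_iff]
  have hk : IsSelfAdjoint k := by
    simp only [IsSelfAdjoint, hk_def, star_smul, star_sub, star_star]
    rw [show star x - x = -(x - star x) by abel, smul_neg, ← neg_smul]
    congr 1
    simp [Complex.ext_iff]; norm_num
  have hx : x = h + Complex.I • k := by
    rw [hh_def, hk_def]
    match_scalars <;> (simp [Complex.ext_iff]; norm_num)
  have hxs : star x = h - Complex.I • k := by
    rw [hh_def, hk_def]
    match_scalars <;> (simp [Complex.ext_iff]; norm_num)
  have hδh := (hsa h hh).star_eq
  have hδk := (hsa k hk).star_eq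
  have e1 : δs (star x) = δs h - Complex.I • δs k := by
    rw [hxs, hlin.map_sub, hlin.map_smul, hlin.map_smul]
  have e2 : δs x = δs h + Complex.I • δs k := by
    conv_lhs => rw [hx]
    rw [hlin.map_add, hlin.map_smul, hlin.map_smul]
  rw [e1, e2, star_add, star_smul, hδh, hδk, Complex.star_def, Complex.conj_I,
    neg_smul, ← sub_eq_add_neg]

/-- For a non-degenerate transfer operator δ*, its range equals δ*(1)·A. -/
theorem range_deltaStar_eq {A : Type*} [CStarAlgebra A] [PartialOrder A]
    [StarOrderedRing A] (δ δs : A → A) (hδ : IsEndomorphism δ)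
    (hT : IsTransferOperator δ δs) (hnd : ∀ a : A, δ (δs (δ a)) = δ a) :
    Set.range δs = {x : A | ∃ a : A, x = δs 1 * a} := by
  obtain ⟨_, hlin, hpos, hcov⟩ := hT
  obtain ⟨hδlin, hδmul, hδstar⟩ := hδ
  have hstar : ∀ x, δs (star x) = star (δs x) :=
    star_preserving_of_positive δs hlin hpos
  -- right covariance: δs (c * δ b) = δs c * b
  have hcov' : ∀ b c : A, δs (c * δ b) = δs c * b := by
    intro b c
    have : δs (c * δ b) = star (δs (star (c * δ b))) := by
      rw [hstar, star_star]
    rw [this, star_mul, ← hδstar, hcov, star_mul, ← hstar, star_star, star_star]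
  -- δs (δ 1) = δs 1
  have h1 : δs (δ 1) = δs 1 := by
    have := hcov 1 1
    simpa using this
  -- δ (δs 1) = δ 1
  have hp : δ (δs 1) = δ 1 := by
    have := hnd 1
    rwa [h1] at this
  ext x
  constructor
  · rintro ⟨a, rfl⟩
    refine ⟨δs a, ?_⟩
    have h2 : δs (δ (δs 1) * a) = δs 1 * δs a := hcov (δs 1) a
    rw [hp] at h2
    have h3 : δs (δ 1 * a) = 1 * δs a := hcov 1 a
    rw [h2] at h3
    rw [one_mul] at h3
    exact h3.symm
  · rintro ⟨a, rfl⟩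
    refine ⟨δ a, ?_⟩
    have := hcov' a 1
    rwa [one_mul] at this
end

section
/- Let δ* be a non-degenerate transfer operator for (A, δ). Then δ* restricts to a *-isomorphism from δ(A) onto δ*(A), inverse to the *-isomorphism δ : δ*(A) → δ(A). Concretely: δ(δ*(x)) = x for every x ∈ δ(A); δ*(δ(y)) = y for every y in the range of δ*; and for all x, y ∈ δ(A) one has δ*(x·y) = δ*(x)·δ*(y) and δ*(x*) = δ*(x)*. -/
/-- For a non-degenerate transfer operator δ*, the restriction
δ* : δ(A) → δ*(A) is a *-isomorphism, inverse to δ : δ*(A) → δ(A). -/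
theorem deltaStar_restriction_star_iso {A : Type*} [CStarAlgebra A] [PartialOrder A]
    [StarOrderedRing A] (δ δs : A → A) (hδ : IsEndomorphism δ)
    (hT : IsTransferOperator δ δs) (hnd : ∀ a : A, δ (δs (δ a)) = δ a) :
    (∀ x ∈ Set.range δ, δ (δs x) = x) ∧
    (∀ y ∈ Set.range δs, δs (δ y) = y) ∧
    (∀ x ∈ Set.range δ, ∀ y ∈ Set.range δ, δs (x * y) = δs x * δs y) ∧
    (∀ x ∈ Set.range δ, δs (star x) = star (δs x)) := by
  obtain ⟨hδlin, hδmul, hδstar⟩ := hδ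
  obtain ⟨-, hlin, hpos, htr⟩ := hT
  -- δs is star-preserving, being a positive linear map
  have hsa : ∀ a : A, 0 ≤ a → star (δs a) = δs a := fun a ha =>
    (IsSelfAdjoint.of_nonneg (hpos a ha)).star_eq
  set L : A →ₗ[ℂ] A := IsLinearMap.mk' δs hlin with hL
  have hLapp : ∀ a, L a = δs a := fun a => rfl
  have hstar : ∀ x, δs (star x) = star (δs x) := by
    intro x
    obtain ⟨p1, p2, p3, p4, h1, h2, h3, h4, hx⟩ :
        ∃ p1 p2 p3 p4 : A, 0 ≤ p1 ∧ 0 ≤ p2 ∧ 0 ≤ p3 ∧ 0 ≤ p4 ∧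
          (p1 - p2) + (Complex.I • p3 - Complex.I • p4) = x :=
      ⟨_, _, _, _, CFC.posPart_nonneg _, CFC.negPart_nonneg _, CFC.posPart_nonneg _,
        CFC.negPart_nonneg _, CStarAlgebra.linear_combination_nonneg x⟩
    have sel : ∀ a : A, 0 ≤ a → star a = a := fun a ha =>
      (IsSelfAdjoint.of_nonneg ha).star_eq
    rw [← hx]
    simp only [star_add, star_sub, star_smul, Complex.star_def, Complex.conj_I,
      sel _ h1, sel _ h2, sel _ h3, sel _ h4, hlin.map_add, hlin.map_sub, hlin.map_smul,
      hsa _ h1, hsa _ h2, hsa _ h3, hsa _ h4, neg_smul, hlin.map_neg]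
  -- the projection e = δ 1 and n = δs (δ 1)
  set e : A := δ 1 with he
  set n : A := δs e with hn
  have hesa : star e = e := by rw [he, ← hδstar, star_one]
  have hee : e * e = e := by rw [he, ← hδmul, one_mul]
  have hepos : (0:A) ≤ e := by
    have : e = star e * e := by rw [hesa, hee]
    rw [this]; exact star_mul_self_nonneg e
  have hnsa : star n = n := hsa e hepos
  have hδn : δ n = e := hnd 1
  -- δs (δ y) = y * n
  have hform : ∀ y, δs (δ y) = y * n := by
    intro y
    have : δ y = δ y * e := by rw [he, ← hδmul, mul_one]
    rw [this, htr y e, hn]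
  -- n is a left unit for the range of δs
  have hka : ∀ c, n * δs c = δs c := by
    intro c
    calc n * δs c = δs (δ n * c) := (htr n c).symm
      _ = δs (δ 1 * c) := by rw [hδn, he]
      _ = 1 * δs c := htr 1 c
      _ = δs c := one_mul _
  -- n is a right unit for the range of δs
  have har : ∀ b, δs b * n = δs b := by
    intro b
    have h := hka (star b)
    rw [hstar] at h
    calc δs b * n = star (n * star (δs b)) := by rw [star_mul, star_star, hnsa]
      _ = star (star (δs b)) := by rw [h]
      _ = δs b := star_star _
  refine ⟨?_, ?_, ?_, ?_⟩
  · rintro x ⟨a, rfl⟩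
    exact hnd a
  · rintro y ⟨b, rfl⟩
    rw [hform, har]
  · rintro x ⟨a, rfl⟩ y ⟨b, rfl⟩
    calc δs (δ a * δ b) = a * δs (δ b) := htr a (δ b)
      _ = a * (b * n) := by rw [hform]
      _ = a * (n * (b * n)) := by rw [← hform b, hka, hform]
      _ = (a * n) * (b * n) := by rw [← mul_assoc]
      _ = δs (δ a) * δs (δ b) := by rw [hform, hform]
  · rintro x ⟨a, rfl⟩
    exact hstar _
end

section
/- Let δ*₁ and δ*₂ be two non-degenerate transfer operators for (A, δ). Then (1) δ*₁(1) = δ*₂(1), and (2) the ranges coincide: δ*₁(A) = δ*₂(A). -/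
/-- A positive linear map on a C*-algebra sends self-adjoint elements to
self-adjoint elements. -/
lemma aux_selfAdjoint_map {A : Type*} [CStarAlgebra A] [PartialOrder A] [StarOrderedRing A]
    (δs : A → A) (hlin : IsLinearMap ℂ δs) (hpos : ∀ a, 0 ≤ a → 0 ≤ δs a)
    {x : A} (hx : IsSelfAdjoint x) : IsSelfAdjoint (δs x) := by
  have hdecomp : x⁺ - x⁻ = x := CFC.posPart_sub_negPart x hx
  have h1 : IsSelfAdjoint (δs x⁺) := (hpos _ (CFC.posPart_nonneg x)).isSelfAdjoint
  have h2 : IsSelfAdjoint (δs x⁻) := (hpos _ (CFC.negPart_nonneg x)).isSelfAdjoint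
  have := h1.sub h2
  rwa [← hlin.map_sub, hdecomp] at this

/-- A positive linear map on a C*-algebra is star-preserving. -/
lemma aux_star_map {A : Type*} [CStarAlgebra A] [PartialOrder A] [StarOrderedRing A]
    (δs : A → A) (hlin : IsLinearMap ℂ δs) (hpos : ∀ a, 0 ≤ a → 0 ≤ δs a)
    (a : A) : δs (star a) = star (δs a) := by
  have hre : IsSelfAdjoint (δs (realPart a : A)) :=
    aux_selfAdjoint_map δs hlin hpos (realPart a).2
  have him : IsSelfAdjoint (δs (imaginaryPart a : A)) :=
    aux_selfAdjoint_map δs hlin hpos (imaginaryPart a).2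
  have hsum : (realPart a : A) + Complex.I • (imaginaryPart a : A) = a :=
    realPart_add_I_smul_imaginaryPart a
  have hstar : star a = (realPart a : A) - Complex.I • (imaginaryPart a : A) := by
    conv_lhs => rw [← hsum]
    rw [star_add, star_smul, (realPart a).2.star_eq, (imaginaryPart a).2.star_eq]
    simp [sub_eq_add_neg, Complex.star_def, Complex.conj_I]
  calc δs (star a) = δs (realPart a : A) - Complex.I • δs (imaginaryPart a : A) := by
        rw [hstar, hlin.map_sub, hlin.map_smul]
    _ = star (δs a) := by
        conv_rhs => rw [← hsum, hlin.map_add, hlin.map_smul, star_add, star_smul,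
          hre.star_eq, him.star_eq]
        simp [sub_eq_add_neg, Complex.star_def, Complex.conj_I]

/-- The "right module" property of a transfer operator. -/
lemma aux_right {A : Type*} [CStarAlgebra A] [PartialOrder A] [StarOrderedRing A]
    (δ δs : A → A) (hδ : IsEndomorphism δ) (hT : IsTransferOperator δ δs)
    (a b : A) : δs (b * δ a) = δs b * a := by
  obtain ⟨_, hlin, hpos, hmod⟩ := hT
  have hstar := aux_star_map δs hlin hpos
  have : δs (star (δ (star a) * star b)) = star (δ (star a) * star b |> δs) := hstar _
  calc δs (b * δ a) = δs (star (δ (star a) * star b)) := by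
        rw [star_mul, star_star, hδ.2.2, star_star]
    _ = star (δs (δ (star a) * star b)) := hstar _
    _ = star (star a * δs (star b)) := by rw [hmod]
    _ = star (δs (star b)) * a := by rw [star_mul, star_star]
    _ = δs b * a := by rw [← hstar, star_star]

/-- Two non-degenerate transfer operators for (A, δ) agree at 1 and have
the same range. -/
theorem nondegenerate_transfer_one_and_range_unique {A : Type*} [CStarAlgebra A]
    [PartialOrder A] [StarOrderedRing A] (δ δs₁ δs₂ : A → A) (hδ : IsEndomorphism δ)
    (hT₁ : IsTransferOperator δ δs₁) (hnd₁ : ∀ a : A, δ (δs₁ (δ a)) = δ a)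
    (hT₂ : IsTransferOperator δ δs₂) (hnd₂ : ∀ a : A, δ (δs₂ (δ a)) = δ a) :
    δs₁ 1 = δs₂ 1 ∧ Set.range δs₁ = Set.range δs₂ := by
  have hmod₁ := hT₁.2.2.2
  have hmod₂ := hT₂.2.2.2
  have hr₁ := aux_right δ δs₁ hδ hT₁
  have hr₂ := aux_right δ δs₂ hδ hT₂
  -- δs i (δ a) = a * δs i 1  and  = δs i 1 * a
  have h1₁ : ∀ a, δs₁ (δ a) = a * δs₁ 1 := fun a => by
    have := hmod₁ a 1; rwa [mul_one] at this
  have h1₂ : ∀ a, δs₂ (δ a) = a * δs₂ 1 := fun a => by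
    have := hmod₂ a 1; rwa [mul_one] at this
  have h1'₂ : ∀ a, δs₂ (δ a) = δs₂ 1 * a := fun a => by
    have := hr₂ a 1; rwa [one_mul] at this
  -- δ (δs i 1) = δ 1
  have he₁ : δ (δs₁ 1) = δ 1 := by
    have := hnd₁ 1; rwa [h1₁ 1, one_mul] at this
  have he₂ : δ (δs₂ 1) = δ 1 := by
    have := hnd₂ 1; rwa [h1₂ 1, one_mul] at this
  -- δs₁ 1 = δs₂ 1
  have key : δs₁ 1 = δs₂ 1 := by
    have ha : δs₁ 1 = δs₂ 1 * δs₁ 1 := by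
      have := h1₁ (δs₂ 1)
      rw [he₂, h1₁ 1, one_mul] at this
      exact this
    have hb : δs₂ 1 = δs₂ 1 * δs₁ 1 := by
      have := h1'₂ (δs₁ 1)
      rw [he₁, h1₂ 1, one_mul] at this
      exact this
    rw [ha, ← hb]
  refine ⟨key, ?_⟩
  -- elements of the range of δs i are fixed by δs j ∘ δ
  have hfix₁ : ∀ b, δs₁ 1 * δs₁ b = δs₁ b := fun b => by
    have := hmod₁ (δs₁ 1) b
    rw [he₁] at this
    rw [← this, hmod₁ 1 b, one_mul]
  have hfix₂ : ∀ b, δs₂ 1 * δs₂ b = δs₂ b := fun b => by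
    have := hmod₂ (δs₂ 1) b
    rw [he₂] at this
    rw [← this, hmod₂ 1 b, one_mul]
  have h1'₁ : ∀ a, δs₁ (δ a) = δs₁ 1 * a := fun a => by
    have := hr₁ a 1; rwa [one_mul] at this
  ext x
  simp only [Set.mem_range]
  constructor
  · rintro ⟨b, rfl⟩
    exact ⟨δ (δs₁ b), by rw [h1'₂, ← key, hfix₁]⟩
  · rintro ⟨b, rfl⟩
    exact ⟨δ (δs₂ b), by rw [h1'₁, key, hfix₂]⟩
end

section
/- Let δ*₁ and δ*₂ be two non-degenerate transfer operators for (A, δ). Then their restrictions to δ(A) coincide: δ*₁(δ(a)) = δ*₂(δ(a)) for every a ∈ A. -/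
/-- Two non-degenerate transfer operators for (A, δ) coincide on δ(A). -/
theorem nondegenerate_transfer_unique_on_range {A : Type*} [CStarAlgebra A]
    [PartialOrder A] [StarOrderedRing A] (δ δs₁ δs₂ : A → A) (hδ : IsEndomorphism δ)
    (hT₁ : IsTransferOperator δ δs₁) (hnd₁ : ∀ a : A, δ (δs₁ (δ a)) = δ a)
    (hT₂ : IsTransferOperator δ δs₂) (hnd₂ : ∀ a : A, δ (δs₂ (δ a)) = δ a) :
    ∀ a : A, δs₁ (δ a) = δs₂ (δ a) := by
  -- evaluation formula: δsᵢ (δ a) = a * δsᵢ 1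
  have h1 : ∀ a : A, δs₁ (δ a) = a * δs₁ 1 := fun a => by
    simpa using hT₁.2.2.2 a 1
  have h2 : ∀ a : A, δs₂ (δ a) = a * δs₂ 1 := fun a => by
    simpa using hT₂.2.2.2 a 1
  -- δ (δsᵢ 1) = δ 1
  have hd1 : δ (δs₁ 1) = δ 1 := by
    have := hnd₁ 1
    rwa [h1 1, one_mul] at this
  have hd2 : δ (δs₂ 1) = δ 1 := by
    have := hnd₂ 1
    rwa [h2 1, one_mul] at this
  -- e₂ = e₁ * e₂ and e₁ = e₂ * e₁
  have key12 : δs₂ 1 = δs₁ 1 * δs₂ 1 := by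
    have := h2 (δs₁ 1)
    rwa [hd1, h2 1, one_mul] at this
  have key21 : δs₁ 1 = δs₂ 1 * δs₁ 1 := by
    have := h1 (δs₂ 1)
    rwa [hd2, h1 1, one_mul] at this
  -- self-adjointness from positivity
  have hs1 : IsSelfAdjoint (δs₁ 1) :=
    IsSelfAdjoint.of_nonneg (hT₁.2.2.1 1 zero_le_one)
  have hs2 : IsSelfAdjoint (δs₂ 1) :=
    IsSelfAdjoint.of_nonneg (hT₂.2.2.1 1 zero_le_one)
  have heq : δs₁ 1 = δs₂ 1 := by
    calc δs₁ 1 = δs₂ 1 * δs₁ 1 := key21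
    _ = star (star (δs₁ 1) * star (δs₂ 1)) := by rw [star_mul, star_star, star_star]
    _ = star (δs₁ 1 * δs₂ 1) := by rw [hs1.star_eq, hs2.star_eq]
    _ = star (δs₂ 1) := by rw [← key12]
    _ = δs₂ 1 := hs2.star_eq
  intro a
  rw [h1, h2, heq]
end

section
/- There exists a complete transfer operator for (A, δ) if and only if the following hold: there exists a central orthogonal projection P ∈ A (P² = P, P* = P, P commutes with all of A) such that (a) δ(P) = δ(1), (b) δ restricted to P·A = {P·a : a ∈ A} is injective with image equal to δ(A), and (ii) δ(A) = {δ(1)·a·δ(1) : a ∈ A}. Moreover, in that case P = δ*(1) for the complete transfer operator δ*. -/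
/-!
For a complete transfer operator `δ*`, the element `P = δ*(1)` is positive and satisfies
`δ*(δ a) = a P`; applying `star` gives `δ*(δ a) = P a`, so `P` is central, and `P² = P` because
`δ P = δ 1`. On `P·A` the operator `δ* ∘ δ` is the identity, which yields injectivity.

Conversely, `δ*` is forced to be the inverse of `δ` on `P·A` applied to `δ 1 * a * δ 1`. Its only
non-algebraic property is positivity: if `c ∈ P·A` and `δ c ≥ 0`, then `c⁻` lies in `P·A` and
`δ (c⁻) = (δ c)⁻ = 0`, so `c⁻ = 0` by injectivity. Continuity is automatic for positive maps of
C*-algebras.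
-/

open ComplexStarModule Set

lemma PositiveLinearMap.map_star_of_cstarAlgebra {A B : Type*} [NonUnitalCStarAlgebra A]
    [PartialOrder A] [StarOrderedRing A] [NonUnitalCStarAlgebra B] [PartialOrder B]
    [StarOrderedRing B] (f : A →ₚ[ℂ] B) (a : A) : f (star a) = star (f a) := by
  have hsa : ∀ s : selfAdjoint A, star (f s) = f s := fun s => (s.2.map' f).star_eq
  rw [← realPart_add_I_smul_imaginaryPart a]
  simp only [map_add, map_smul, star_add, star_smul, hsa, selfAdjoint.star_val_eq]

open scoped CStarAlgebra in
lemma NonUnitalStarAlgHom.map_negPart {A B : Type*} [NonUnitalCStarAlgebra A]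
    [NonUnitalCStarAlgebra B] (φ : A →⋆ₙₐ[ℂ] B) {a : A} (ha : IsSelfAdjoint a) :
    φ a⁻ = (φ a)⁻ :=
  φ.map_cfcₙ (·⁻ : ℝ → ℝ) a (hφa := ha.map φ)

section CentralProjection

variable {A : Type*} [NonUnitalCStarAlgebra A]

structure IsCentralProjection (P : A) : Prop where
  mul_self : P * P = P
  star_eq : star P = P
  comm : ∀ a, P * a = a * P

def IsCentralProjection.mulLeft {P : A} (hP : IsCentralProjection P) : A →⋆ₙₐ[ℂ] A where
  toFun x := P * x
  map_add' := mul_add P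
  map_smul' r x := mul_smul_comm r P x
  map_zero' := mul_zero P
  map_mul' x y := by
    show P * (x * y) = P * x * (P * y)
    rw [← mul_assoc, ← mul_assoc, mul_assoc P x P, ← hP.comm x, ← mul_assoc, hP.mul_self]
  map_star' x := by
    show P * star x = star (P * x)
    rw [star_mul, hP.star_eq, hP.comm]

lemma IsCentralProjection.mul_negPart {P c : A} (hP : IsCentralProjection P)
    (hc : IsSelfAdjoint c) (hPc : P * c = c) : P * c⁻ = c⁻ := by
  have h := hP.mulLeft.map_negPart hc
  change P * c⁻ = (P * c)⁻ at h
  rwa [hPc] at h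

/-- For a central projection `P`, the ideal `P·A` is the corner `P A P`. -/
def corner (P : A) : Set A := {x | ∃ a, x = P * a}

lemma mem_corner_iff {P x : A} (hP : P * P = P) : x ∈ corner P ↔ P * x = x :=
  ⟨fun ⟨a, ha⟩ => by rw [ha, ← mul_assoc, hP], fun h => ⟨x, h.symm⟩⟩

lemma add_mem_corner {P x y : A} (hx : x ∈ corner P) (hy : y ∈ corner P) : x + y ∈ corner P := by
  obtain ⟨a, rfl⟩ := hx
  obtain ⟨b, rfl⟩ := hy
  exact ⟨a + b, (mul_add P a b).symm⟩

lemma smul_mem_corner {P x : A} (c : ℂ) (hx : x ∈ corner P) : c • x ∈ corner P := by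
  obtain ⟨a, rfl⟩ := hx
  exact ⟨c • a, (mul_smul_comm c P a).symm⟩

lemma mul_mem_corner {P x : A} (hP : ∀ a, P * a = a * P) (a : A) (hx : x ∈ corner P) :
    a * x ∈ corner P := by
  obtain ⟨b, rfl⟩ := hx
  exact ⟨a * b, by rw [← mul_assoc, ← hP, mul_assoc]⟩

lemma IsCentralProjection.star_mem_corner {P x : A} (hP : IsCentralProjection P)
    (hx : x ∈ corner P) : star x ∈ corner P := by
  obtain ⟨a, rfl⟩ := hx
  exact ⟨star a, by rw [star_mul, hP.star_eq, hP.comm]⟩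

end CentralProjection

section Endomorphism

variable {A : Type*} [CStarAlgebra A] {δ : A → A}

noncomputable def IsEndomorphism.toNonUnitalStarAlgHom (hδ : IsEndomorphism δ) : A →⋆ₙₐ[ℂ] A where
  toFun := δ
  map_smul' := hδ.1.map_smul
  map_zero' := hδ.1.map_zero
  map_add' := hδ.1.map_add
  map_mul' := hδ.2.1
  map_star' := hδ.2.2

lemma IsEndomorphism.map_one_mul (hδ : IsEndomorphism δ) (a : A) : δ 1 * δ a = δ a := by
  rw [← hδ.2.1, one_mul]

lemma IsEndomorphism.map_mul_map_one (hδ : IsEndomorphism δ) (a : A) : δ a * δ 1 = δ a := by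
  rw [← hδ.2.1, mul_one]

lemma IsEndomorphism.star_map_one (hδ : IsEndomorphism δ) : star (δ 1) = δ 1 := by
  rw [← hδ.2.2, star_one]

variable [PartialOrder A] [StarOrderedRing A]

lemma IsCentralProjection.nonneg_of_map_nonneg {P c : A} (hP : IsCentralProjection P)
    (hδ : IsEndomorphism δ) (hInj : InjOn δ (corner P)) (hc : IsSelfAdjoint c)
    (hcP : c ∈ corner P) (hδc : 0 ≤ δ c) : 0 ≤ c := by
  have hneg_mem : c⁻ ∈ corner P :=
    (mem_corner_iff hP.mul_self).2 (hP.mul_negPart hc ((mem_corner_iff hP.mul_self).1 hcP))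
  have hδneg : δ c⁻ = δ 0 := by
    rw [hδ.1.map_zero, ← CFC.negPart_eq_zero_iff (δ c) (hc.map hδ.toNonUnitalStarAlgHom) |>.2 hδc]
    exact hδ.toNonUnitalStarAlgHom.map_negPart hc
  exact (CFC.negPart_eq_zero_iff c).1 (hInj hneg_mem ⟨0, (mul_zero P).symm⟩ hδneg)

end Endomorphism

section Complete

variable {A : Type*} [CStarAlgebra A] {δ δs : A → A} (hc : ∀ a, δ (δs a) = δ 1 * a * δ 1)
include hc

lemma map_apply_one_of_complete (hδ : IsEndomorphism δ) : δ (δs 1) = δ 1 := by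
  rw [hc, mul_one, hδ.map_one_mul]

lemma image_corner_of_complete (hδ : IsEndomorphism δ) : δ '' corner (δs 1) = range δ := by
  refine (image_subset_range _ _).antisymm ?_
  rintro _ ⟨a, rfl⟩
  exact ⟨δs 1 * a, ⟨a, rfl⟩, by rw [hδ.2.1, map_apply_one_of_complete hc hδ, hδ.map_one_mul]⟩

lemma range_eq_of_complete (hδ : IsEndomorphism δ) :
    range δ = {x | ∃ a, x = δ 1 * a * δ 1} := by
  refine Subset.antisymm ?_ ?_
  · rintro _ ⟨a, rfl⟩
    exact ⟨δ a, by rw [hδ.map_one_mul, hδ.map_mul_map_one]⟩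
  · rintro _ ⟨a, rfl⟩
    exact ⟨δs a, hc a⟩

end Complete

namespace IsTransferOperator

variable {A : Type*} [CStarAlgebra A] [PartialOrder A] [StarOrderedRing A] {δ δs : A → A}

noncomputable def toPositiveLinearMap (h : IsTransferOperator δ δs) : A →ₚ[ℂ] A :=
  .mk₀ (IsLinearMap.mk' δs h.2.1) h.2.2.1

lemma map_star (h : IsTransferOperator δ δs) (a : A) : δs (star a) = star (δs a) :=
  h.toPositiveLinearMap.map_star_of_cstarAlgebra a

lemma star_apply_one (h : IsTransferOperator δ δs) : star (δs 1) = δs 1 :=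
  (h.2.2.1 1 zero_le_one).isSelfAdjoint.star_eq

lemma apply_map (h : IsTransferOperator δ δs) (a : A) : δs (δ a) = a * δs 1 := by
  simpa using h.2.2.2 a 1

lemma apply_map_eq_apply_one_mul (hδ : IsEndomorphism δ) (h : IsTransferOperator δ δs)
    (a : A) : δs (δ a) = δs 1 * a := by
  have h' := congrArg star (h.apply_map (star a))
  rwa [← h.map_star, ← hδ.2.2, star_star, star_mul, star_star, h.star_apply_one] at h'

lemma isCentralProjection_apply_one (hδ : IsEndomorphism δ) (h : IsTransferOperator δ δs)
    (hc : ∀ a, δ (δs a) = δ 1 * a * δ 1) : IsCentralProjection (δs 1) where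
  mul_self := by rw [← h.apply_map, map_apply_one_of_complete hc hδ, h.apply_map, one_mul]
  star_eq := h.star_apply_one
  comm a := (h.apply_map_eq_apply_one_mul hδ a).symm.trans (h.apply_map a)

lemma injOn_corner_apply_one (hδ : IsEndomorphism δ) (h : IsTransferOperator δ δs)
    (hc : ∀ a, δ (δs a) = δ 1 * a * δ 1) : InjOn δ (corner (δs 1)) := by
  have hleft : ∀ x ∈ corner (δs 1), δs (δ x) = x := fun x hx => by
    rwa [h.apply_map_eq_apply_one_mul hδ,
      ← mem_corner_iff (h.isCentralProjection_apply_one hδ hc).mul_self]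
  exact fun x hx y hy hxy => by rw [← hleft x hx, hxy, hleft y hy]

lemma eq_apply_one (hδ : IsEndomorphism δ) (h : IsTransferOperator δ δs)
    (hc : ∀ a, δ (δs a) = δ 1 * a * δ 1) {P : A} (hP : P * P = P) (hPδ : δ P = δ 1)
    (hInj : InjOn δ (corner P)) : P = δs 1 := by
  have hmem : δs 1 ∈ corner P := ⟨δs 1, by rw [← h.apply_map, hPδ, h.apply_map, one_mul]⟩
  exact hInj ⟨P, hP.symm⟩ hmem (by rw [hPδ, map_apply_one_of_complete hc hδ])

end IsTransferOperator

section CornerLift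

variable {A : Type*} [CStarAlgebra A] {δ : A → A} {P : A}

noncomputable def cornerLift (δ : A → A) (P a : A) : A :=
  Function.invFunOn δ (corner P) (δ 1 * a * δ 1)

variable (hIm : δ '' corner P = range δ) (hRange : range δ = {x | ∃ a, x = δ 1 * a * δ 1})
include hIm hRange

lemma cornerLift_mem_corner (a : A) : cornerLift δ P a ∈ corner P := by
  have : δ 1 * a * δ 1 ∈ δ '' corner P := by rw [hIm, hRange]; exact ⟨a, rfl⟩
  exact Function.invFunOn_mem this

lemma map_cornerLift (a : A) : δ (cornerLift δ P a) = δ 1 * a * δ 1 := by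
  have : δ 1 * a * δ 1 ∈ δ '' corner P := by rw [hIm, hRange]; exact ⟨a, rfl⟩
  exact Function.invFunOn_eq this

variable (hInj : InjOn δ (corner P))
include hInj

lemma cornerLift_eq {a x : A} (hx : x ∈ corner P) (h : δ x = δ 1 * a * δ 1) :
    cornerLift δ P a = x :=
  hInj (cornerLift_mem_corner hIm hRange a) hx (by rw [map_cornerLift hIm hRange, h])

variable (hδ : IsEndomorphism δ)
include hδ

lemma isLinearMap_cornerLift : IsLinearMap ℂ (cornerLift δ P) where
  map_add a b := cornerLift_eq hIm hRange hInj
    (add_mem_corner (cornerLift_mem_corner hIm hRange a) (cornerLift_mem_corner hIm hRange b))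
    (by rw [hδ.1.map_add, map_cornerLift hIm hRange, map_cornerLift hIm hRange, mul_add, add_mul])
  map_smul c a := cornerLift_eq hIm hRange hInj
    (smul_mem_corner c (cornerLift_mem_corner hIm hRange a))
    (by rw [hδ.1.map_smul, map_cornerLift hIm hRange, mul_smul_comm, smul_mul_assoc])

lemma cornerLift_map_mul (hP : ∀ a, P * a = a * P) (a b : A) :
    cornerLift δ P (δ a * b) = a * cornerLift δ P b := by
  refine cornerLift_eq hIm hRange hInj (mul_mem_corner hP a (cornerLift_mem_corner hIm hRange b)) ?_
  rw [hδ.2.1, map_cornerLift hIm hRange]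
  calc δ a * (δ 1 * b * δ 1) = δ a * δ 1 * b * δ 1 := by simp only [mul_assoc]
    _ = δ 1 * δ a * b * δ 1 := by rw [hδ.map_mul_map_one, hδ.map_one_mul]
    _ = δ 1 * (δ a * b) * δ 1 := by simp only [mul_assoc]

lemma IsCentralProjection.cornerLift_star (hP : IsCentralProjection P) (a : A) :
    cornerLift δ P (star a) = star (cornerLift δ P a) := by
  refine cornerLift_eq hIm hRange hInj (hP.star_mem_corner (cornerLift_mem_corner hIm hRange a)) ?_
  rw [hδ.2.2, map_cornerLift hIm hRange, star_mul, star_mul, hδ.star_map_one, mul_assoc]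

variable [PartialOrder A] [StarOrderedRing A]

lemma IsCentralProjection.cornerLift_nonneg (hP : IsCentralProjection P) {a : A} (ha : 0 ≤ a) :
    0 ≤ cornerLift δ P a := by
  refine hP.nonneg_of_map_nonneg hδ hInj ?_ (cornerLift_mem_corner hIm hRange a) ?_
  · rw [IsSelfAdjoint, ← hP.cornerLift_star hIm hRange hInj hδ, ha.isSelfAdjoint.star_eq]
  · rw [map_cornerLift hIm hRange]
    simpa [hδ.star_map_one] using star_left_conjugate_nonneg ha (δ 1)

lemma IsCentralProjection.isTransferOperator_cornerLift (hP : IsCentralProjection P) :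
    IsTransferOperator δ (cornerLift δ P) :=
  have hlin := isLinearMap_cornerLift hIm hRange hInj hδ
  have hpos := fun a => hP.cornerLift_nonneg hIm hRange hInj hδ (a := a)
  ⟨map_continuous (PositiveLinearMap.mk₀ (IsLinearMap.mk' _ hlin) hpos), hlin, hpos,
    cornerLift_map_mul hIm hRange hInj hδ hP.comm⟩

end CornerLift

/-- A complete transfer operator exists iff there is a central orthogonal
projection P with δ(P) = δ(1) such that δ restricted to P·A is injective with
image δ(A), and δ(A) = δ(1)·A·δ(1). Moreover in that case P = δ*(1). -/
theorem complete_transfer_exists_iff_central_projection {A : Type*} [CStarAlgebra A]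
    [PartialOrder A] [StarOrderedRing A] (δ : A → A) (hδ : IsEndomorphism δ) :
    ((∃ δs : A → A, IsTransferOperator δ δs ∧ ∀ a : A, δ (δs a) = δ 1 * a * δ 1) ↔
      (∃ P : A, P * P = P ∧ star P = P ∧ (∀ a : A, P * a = a * P) ∧
          δ P = δ 1 ∧
          Set.InjOn δ {x : A | ∃ a : A, x = P * a} ∧
          δ '' {x : A | ∃ a : A, x = P * a} = Set.range δ) ∧
        Set.range δ = {x : A | ∃ a : A, x = δ 1 * a * δ 1}) ∧
    (∀ δs : A → A, ∀ P : A,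
      IsTransferOperator δ δs → (∀ a : A, δ (δs a) = δ 1 * a * δ 1) →
      P * P = P → star P = P → (∀ a : A, P * a = a * P) →
      δ P = δ 1 →
      Set.InjOn δ {x : A | ∃ a : A, x = P * a} →
      δ '' {x : A | ∃ a : A, x = P * a} = Set.range δ →
      P = δs 1) := by
  refine ⟨⟨?_, ?_⟩, ?_⟩
  · rintro ⟨δs, h, hc⟩
    have hP := h.isCentralProjection_apply_one hδ hc
    exact ⟨⟨δs 1, hP.mul_self, hP.star_eq, hP.comm, map_apply_one_of_complete hc hδ,
      h.injOn_corner_apply_one hδ hc, image_corner_of_complete hc hδ⟩,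
      range_eq_of_complete hc hδ⟩
  · rintro ⟨⟨P, hP2, hPstar, hPc, -, hInj, hIm⟩, hRange⟩
    have hP : IsCentralProjection P := ⟨hP2, hPstar, hPc⟩
    exact ⟨cornerLift δ P, hP.isTransferOperator_cornerLift hIm hRange hInj hδ,
      map_cornerLift hIm hRange⟩
  · intro δs P h hc hP2 _ _ hPδ hInj _
    exact h.eq_apply_one hδ hc hP2 hPδ hInj
end

section
/- A complete transfer operator, if it exists, is unique: if δ*₁ and δ*₂ are both complete transfer operators for (A, δ), then δ*₁(a) = δ*₂(a) for every a ∈ A. -/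
open ComplexStarModule in
lemma starMapAux {A : Type*} [CStarAlgebra A] [PartialOrder A] [StarOrderedRing A]
    (f : A → A) (hlin : IsLinearMap ℂ f) (hpos : ∀ a, 0 ≤ a → 0 ≤ f a) :
    ∀ a, f (star a) = star (f a) := by
  have hsa : ∀ x : A, IsSelfAdjoint x → IsSelfAdjoint (f x) := by
    intro x hx
    have h := CFC.posPart_sub_negPart x hx
    rw [← h, hlin.map_sub]
    exact ((hpos _ (CFC.posPart_nonneg x)).isSelfAdjoint).sub
      ((hpos _ (CFC.negPart_nonneg x)).isSelfAdjoint)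
  intro a
  have hdecomp : a = (ℜ a : A) + (Complex.I : ℂ) • (ℑ a : A) :=
    (realPart_add_I_smul_imaginaryPart a).symm
  have hstara : star a = (ℜ a : A) - (Complex.I : ℂ) • (ℑ a : A) := by
    conv_lhs => rw [hdecomp]
    rw [star_add, star_smul, (ℜ a).2.star_eq, (ℑ a).2.star_eq]
    simp [sub_eq_add_neg, neg_smul]
  have h1 := hsa _ (ℜ a).2
  have h2 := hsa _ (ℑ a).2
  rw [hstara, hlin.map_sub, hlin.map_smul]
  conv_rhs => rw [hdecomp]
  rw [hlin.map_add, hlin.map_smul, star_add, star_smul, h1.star_eq, h2.star_eq]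
  simp [sub_eq_add_neg, neg_smul]

/-- A complete transfer operator, if it exists, is unique. -/
theorem complete_transfer_unique {A : Type*} [CStarAlgebra A] [PartialOrder A]
    [StarOrderedRing A] (δ δs₁ δs₂ : A → A) (hδ : IsEndomorphism δ)
    (hT₁ : IsTransferOperator δ δs₁) (hc₁ : ∀ a : A, δ (δs₁ a) = δ 1 * a * δ 1)
    (hT₂ : IsTransferOperator δ δs₂) (hc₂ : ∀ a : A, δ (δs₂ a) = δ 1 * a * δ 1) :
    ∀ a : A, δs₁ a = δs₂ a := by
  obtain ⟨hδlin, hδmul, hδstar⟩ := hδ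
  obtain ⟨-, hlin₁, hpos₁, htr₁⟩ := hT₁
  obtain ⟨-, hlin₂, hpos₂, htr₂⟩ := hT₂
  have hstar₁ := starMapAux δs₁ hlin₁ hpos₁
  have hstar₂ := starMapAux δs₂ hlin₂ hpos₂
  -- δ 1 is self-adjoint
  have hδ1 : star (δ 1) = δ 1 := by rw [← hδstar, star_one]
  -- right module property at 1 : δsᵢ (b * δ 1) = δsᵢ b
  have hr : ∀ (δs : A → A), (∀ a, δs (star a) = star (δs a)) →
      (∀ a b, δs (δ a * b) = a * δs b) → ∀ b, δs (b * δ 1) = δs b := by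
    intro δs hst htr b
    have : δs (b * δ 1) = star (δs (star (b * δ 1))) := by rw [hst, star_star]
    rw [this, star_mul, hδ1, htr 1 (star b), one_mul, hst, star_star]
  have hr₁ := hr δs₁ hstar₁ htr₁
  have hr₂ := hr δs₂ hstar₂ htr₂
  -- δsᵢ (δ 1 * b * δ 1) = δsᵢ b
  have hsand₁ : ∀ b, δs₁ (δ 1 * b * δ 1) = δs₁ b := by
    intro b; rw [mul_assoc, htr₁ 1, one_mul, hr₁]
  have hsand₂ : ∀ b, δs₂ (δ 1 * b * δ 1) = δs₂ b := by
    intro b; rw [mul_assoc, htr₂ 1, one_mul, hr₂]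
  -- key cross identities
  have G12 : ∀ a, δs₁ a * δs₂ 1 = δs₂ a := by
    intro a
    have h := htr₂ (δs₁ a) 1
    rw [mul_one, hc₁ a] at h
    rw [← h, hsand₂]
  have G21 : ∀ a, δs₂ a * δs₁ 1 = δs₁ a := by
    intro a
    have h := htr₁ (δs₂ a) 1
    rw [mul_one, hc₂ a] at h
    rw [← h, hsand₁]
  -- units agree
  have hu₁ : star (δs₁ 1) = δs₁ 1 := (hpos₁ 1 zero_le_one).isSelfAdjoint.star_eq
  have hu₂ : star (δs₂ 1) = δs₂ 1 := (hpos₂ 1 zero_le_one).isSelfAdjoint.star_eq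
  have e1 : δs₁ 1 * δs₂ 1 = δs₂ 1 := G12 1
  have e2 : δs₂ 1 * δs₁ 1 = δs₁ 1 := G21 1
  have hu : δs₁ 1 = δs₂ 1 := by
    have : star (δs₁ 1 * δs₂ 1) = star (δs₂ 1) := by rw [e1]
    rw [star_mul, hu₁, hu₂, e2] at this
    exact this.symm ▸ rfl
  intro a
  calc δs₁ a = δs₂ a * δs₁ 1 := (G21 a).symm
    _ = δs₂ a * δs₂ 1 := by rw [hu]
    _ = (δs₁ a * δs₂ 1) * δs₂ 1 := by rw [G12 a]
    _ = δs₁ a * (δs₂ 1 * δs₂ 1) := by rw [mul_assoc]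
    _ = δs₁ a * δs₂ 1 := by rw [show δs₂ 1 * δs₂ 1 = δs₂ 1 from by rw [hu] at e1; exact e1]
    _ = δs₂ a := G12 a
end

section
/- Let δ* be a complete transfer operator for (A, δ) and suppose δ(1) lies in the center of A. Then δ* : A → A is multiplicative, i.e. δ*(a·b) = δ*(a)·δ*(b) for all a, b ∈ A (so δ* is itself a *-endomorphism of A). -/
/-- If δ* is a complete transfer operator and δ(1) is central, then δ* is
multiplicative (hence a *-endomorphism of A). -/
theorem deltaStar_multiplicative {A : Type*} [CStarAlgebra A] [PartialOrder A]
    [StarOrderedRing A] (δ δs : A → A) (hδ : IsEndomorphism δ)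
    (hT : IsTransferOperator δ δs) (hc : ∀ a : A, δ (δs a) = δ 1 * a * δ 1)
    (hcen : ∀ a : A, δ 1 * a = a * δ 1) :
    ∀ a b : A, δs (a * b) = δs a * δs b := by
  intro a b
  obtain ⟨hlin, hmul, hstar⟩ := hδ
  obtain ⟨_, _, _, htr⟩ := hT
  have h1 : δ 1 * δ 1 = δ 1 := by
    conv_rhs => rw [show (1 : A) = 1 * 1 by rw [one_mul]]
    rw [hmul]
  have key : δs (δ (δs a) * b) = δs a * δs b := htr (δs a) b
  rw [hc] at key
  have heq : δ 1 * a * δ 1 * b = δ 1 * (a * b) := by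
    rw [mul_assoc (δ 1) a (δ 1), ← hcen a, ← mul_assoc, h1, mul_assoc]
  rw [heq, htr 1 (a * b), one_mul] at key
  exact key
end

section
/- (Necessity in the main theorem.) Suppose there exist a complex Hilbert space H, an injective unital *-homomorphism π : A → B(H) into the bounded operators on H, and a bounded operator U ∈ B(H) such that for every a ∈ A: U·π(a)·U* = π(δ(a)), U*·π(a)·U ∈ π(A), and U·π(a) = π(δ(a))·U. Then there exists a complete transfer operator δ* for (A, δ); moreover it satisfies π(δ*(a)) = U*·π(a)·U for all a ∈ A. -/
/-!
Injectivity of `π` transports everything to `B(H)`. Define `δ*` by `π (δ* a) = U* π(a) U`,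
which is possible by the range condition. Linearity and continuity are inherited from the
compression `x ↦ U* x U`, and positivity too, since `π` is an order embedding. Taking adjoints in
`U π(a) = π(δ a) U` gives `π(a) U* = U* π(δ a)` (δ is a *-map because `x ↦ U x U*` is), which is
the transfer identity; and `π(δ 1) = U U*` turns `δ (δ* a) = U U* π(a) U U*` into completeness.
-/

lemma StarAlgHom.nonneg_of_map_nonneg {A B : Type*} [CStarAlgebra A] [CStarAlgebra B]
    [PartialOrder A] [StarOrderedRing A] [PartialOrder B] [StarOrderedRing B]
    (φ : A →⋆ₐ[ℂ] B) (hφ : Function.Injective φ) {a : A} (h : 0 ≤ φ a) : 0 ≤ a := by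
  have ha : IsSelfAdjoint a := hφ <| by rw [map_star, (IsSelfAdjoint.of_nonneg h).star_eq]
  rw [StarOrderedRing.nonneg_iff_spectrum_nonneg (R := ℝ) a ha, ← ha.map_spectrum_real φ hφ]
  exact fun x hx ↦ spectrum_nonneg_of_nonneg h hx

section Compression

variable {A B : Type*} [CStarAlgebra A] [CStarAlgebra B]
  {π : A →⋆ₐ[ℂ] B} (hπ : Function.Injective π) {U : B}

include hπ

lemma map_star_of_map_eq_conj {δ : A → A} (hδ : ∀ a, π (δ a) = U * π a * star U) (a : A) :
    δ (star a) = star (δ a) :=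
  hπ <| by rw [hδ, map_star, map_star, hδ, star_mul, star_mul, star_star, mul_assoc]

variable {T : A → A} (hT : ∀ a, π (T a) = star U * π a * U)

include hT

lemma isLinearMap_of_map_eq_conj : IsLinearMap ℂ T where
  map_add x y := hπ <| by rw [map_add, hT, hT, hT, map_add]; noncomm_ring
  map_smul c x := hπ <| by rw [map_smul, hT, hT, map_smul, mul_smul_comm, smul_mul_assoc]

lemma norm_le_of_map_eq_conj (a : A) : ‖T a‖ ≤ ‖U‖ * ‖U‖ * ‖a‖ := by
  rw [← NonUnitalStarAlgHom.norm_map π hπ, hT, ← NonUnitalStarAlgHom.norm_map π hπ a,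
    ← norm_star U]
  calc ‖star U * π a * U‖ ≤ ‖star U * π a‖ * ‖U‖ := norm_mul_le _ _
    _ ≤ ‖star U‖ * ‖π a‖ * ‖U‖ := by gcongr; exact norm_mul_le _ _
    _ = ‖star U‖ * ‖star U‖ * ‖π a‖ := by rw [norm_star]; ring

lemma continuous_of_map_eq_conj : Continuous T :=
  AddMonoidHomClass.continuous_of_bound (IsLinearMap.mk' T (isLinearMap_of_map_eq_conj hπ hT))
    _ (norm_le_of_map_eq_conj hπ hT)

lemma nonneg_of_map_eq_conj [PartialOrder A] [StarOrderedRing A] [PartialOrder B]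
    [StarOrderedRing B] {a : A} (ha : 0 ≤ a) : 0 ≤ T a :=
  π.nonneg_of_map_nonneg hπ <| hT a ▸ star_left_conjugate_nonneg (map_nonneg π ha) U

lemma map_mul_of_map_eq_conj {δ : A → A} (hδ : ∀ a, π (δ a) = U * π a * star U)
    (hU : ∀ a, U * π a = π (δ a) * U) (a b : A) : T (δ a * b) = a * T b := by
  have hUstar : π a * star U = star U * π (δ a) := by
    simpa [← map_star, ← map_star_of_map_eq_conj hπ hδ] using congrArg star (hU (star a))
  refine hπ ?_
  calc π (T (δ a * b)) = star U * π (δ a) * π b * U := by rw [hT, map_mul]; noncomm_ring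
    _ = π a * (star U * π b * U) := by rw [← hUstar]; noncomm_ring
    _ = π (a * T b) := by rw [map_mul, hT]

lemma map_apply_eq_of_map_eq_conj {δ : A → A} (hδ : ∀ a, π (δ a) = U * π a * star U) (a : A) :
    δ (T a) = δ 1 * a * δ 1 := by
  have hδ1 : π (δ 1) = U * star U := by rw [hδ, map_one, mul_one]
  refine hπ ?_
  rw [hδ, hT, map_mul, map_mul, hδ1]
  noncomm_ring

end Compression

theorem coefficient_algebra_necessity_general {A : Type*} [CStarAlgebra A] [PartialOrder A]
    [StarOrderedRing A] (δ : A → A)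
    {H : Type*} [NormedAddCommGroup H] [InnerProductSpace ℂ H] [CompleteSpace H]
    (π : A →⋆ₐ[ℂ] (H →L[ℂ] H)) (U : H →L[ℂ] H)
    (hinj : Function.Injective π)
    (h1 : ∀ a : A, U * π a * star U = π (δ a))
    (h2 : ∀ a : A, star U * π a * U ∈ Set.range π)
    (h3 : ∀ a : A, U * π a = π (δ a) * U) :
    ∃ δs : A → A, IsTransferOperator δ δs ∧ (∀ a : A, δ (δs a) = δ 1 * a * δ 1) ∧
      ∀ a : A, π (δs a) = star U * π a * U := by
  choose δs hδs using h2
  have hδ : ∀ a, π (δ a) = U * π a * star U := fun a ↦ (h1 a).symm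
  exact ⟨δs, ⟨continuous_of_map_eq_conj hinj hδs, isLinearMap_of_map_eq_conj hinj hδs,
      fun _ ↦ nonneg_of_map_eq_conj hinj hδs, map_mul_of_map_eq_conj hinj hδs hδ h3⟩,
    map_apply_eq_of_map_eq_conj hinj hδs hδ, hδs⟩

/-- Necessity in the main theorem: if (H, π, U) realizes A as a coefficient
algebra associated with δ, then there exists a complete transfer operator δ*
for (A, δ), implemented by U* · U. -/
theorem coefficient_algebra_necessity {A : Type*} [CStarAlgebra A] [PartialOrder A]
    [StarOrderedRing A] (δ : A → A) (hδ : IsEndomorphism δ)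
    {H : Type*} [NormedAddCommGroup H] [InnerProductSpace ℂ H] [CompleteSpace H]
    (π : A →⋆ₐ[ℂ] (H →L[ℂ] H)) (U : H →L[ℂ] H)
    (hinj : Function.Injective π)
    (h1 : ∀ a : A, U * π a * star U = π (δ a))
    (h2 : ∀ a : A, star U * π a * U ∈ Set.range π)
    (h3 : ∀ a : A, U * π a = π (δ a) * U) :
    ∃ δs : A → A, IsTransferOperator δ δs ∧ (∀ a : A, δ (δs a) = δ 1 * a * δ 1) ∧
      ∀ a : A, π (δs a) = star U * π a * U :=
  coefficient_algebra_necessity_general δ π U hinj h1 h2 h3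
end

section
/- Let H be a complex Hilbert space, let A ⊆ B(H) be a *-subalgebra containing the identity operator, and let V ∈ B(H). If V*·V·a·V*·b·V = a·V*·b·V for all a, b ∈ A, then V*·V commutes with every element of A: V*·V·a = a·V*·V for all a ∈ A. -/
/-- If A ⊆ B(H) is a unital *-subalgebra and V ∈ B(H) satisfies
V*·V·a·V*·b·V = a·V*·b·V for all a, b ∈ A, then V*·V commutes with A. -/
theorem adjoint_mul_self_commutes {H : Type*} [NormedAddCommGroup H]
    [InnerProductSpace ℂ H] [CompleteSpace H]
    (A : StarSubalgebra ℂ (H →L[ℂ] H)) (V : H →L[ℂ] H)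
    (h : ∀ a ∈ A, ∀ b ∈ A,
      star V * V * a * star V * b * V = a * (star V * b * V)) :
    ∀ a ∈ A, star V * V * a = a * (star V * V) := by
  intro a ha
  have h1 := h a ha 1 A.one_mem
  have h2 := congrArg star (h (star a) (star_mem ha) 1 A.one_mem)
  simp only [mul_one, star_mul, star_star, star_one, one_mul, mul_assoc] at h1 h2 ⊢
  rw [← h2, h1]
end
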